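/- arXiv:1501.02695 — 10 statements merged into one kernel-verified Lean document; each statement's English description precedes it below -/
import Mathlib

section
/- Fix an integer k ≥ 1 and define g_k(x) = x·f_{k−1}(x)/f_k(x) for x > 0. Then for every x > 0 the derivative of g_k at x is strictly positive; in particular, g_k is strictly increasing on (0, ∞). -/
/-- `fPo k μ = e^{-μ} ∑_{i ≥ k} μ^i / i!`, the probability that a Poisson random
variable with mean `μ` is at least `k`. -/
noncomputable def fPo (k : ℕ) (μ : ℝ) : ℝ :=
  Real.exp (-μ) * ∑' i : ℕ, μ ^ (k + i) / (Nat.factorial (k + i) : ℝ)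

/-- `gPo k x = x * f_{k-1}(x) / f_k(x)`. -/
noncomputable def gPo (k : ℕ) (x : ℝ) : ℝ := x * fPo (k - 1) x / fPo k x

/-!
With `q_n(x) = x^n/n!` and `S_k = ∑_{i ≥ k} q_i` we have `f_k = e^{-x} S_k`, `S_k' = S_{k-1}` and,
as `x q_{k-1} = k q_k`, `g_k = x + k q_k / S_k`. Hence
`g_k' = (S_k² - k (q_k S_k - q_{k-1} S_{k+1})) / S_k²`. Expanded termwise,
`k (q_k S_k - q_{k-1} S_{k+1}) = ∑_j (j+1) q_{k-1} q_{k+1+j}`, whereas the Cauchy product gives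
`S_k² ≥ ∑_j (j+1) q_k q_{k+j}`. This bound and the termwise comparison
`q_{k-1} q_{k+1+j} < q_k q_{k+j}` of the two series are both instances of the log-concavity of
`n ↦ q_n`.
-/

open Finset
open scoped Nat

noncomputable def expTerm (n : ℕ) (x : ℝ) : ℝ := x ^ n / n !

noncomputable def expTail (k : ℕ) (x : ℝ) : ℝ := ∑' i, expTerm (k + i) x

lemma fPo_eq_exp_mul_expTail (k : ℕ) (x : ℝ) : fPo k x = Real.exp (-x) * expTail k x := rfl

lemma factorial_add_mul_factorial_add_le (k i j : ℕ) :
    (k + i)! * (k + j)! ≤ k ! * (k + i + j)! := by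
  rw [← Nat.factorial_mul_ascFactorial k i, add_right_comm,
    ← Nat.factorial_mul_ascFactorial (k + j) i, mul_right_comm, mul_assoc]
  exact Nat.mul_le_mul_left _ (Nat.mul_le_mul_left _ (Nat.ascFactorial_le i (by omega)))

lemma expTerm_pos {x : ℝ} (hx : 0 < x) (n : ℕ) : 0 < expTerm n x := by
  unfold expTerm; positivity

lemma expTerm_nonneg {x : ℝ} (hx : 0 ≤ x) (n : ℕ) : 0 ≤ expTerm n x := by
  unfold expTerm; positivity

lemma mul_expTerm (n : ℕ) (x : ℝ) : x * expTerm n x = (n + 1) * expTerm (n + 1) x := by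
  simp only [expTerm, Nat.factorial_succ, pow_succ, Nat.cast_mul, Nat.cast_succ]
  field_simp

lemma hasDerivAt_expTerm_succ (n : ℕ) (x : ℝ) :
    HasDerivAt (expTerm (n + 1)) (expTerm n x) x := by
  refine ((hasDerivAt_pow (n + 1) x).div_const ((n + 1)! : ℝ)).congr_deriv ?_
  rw [expTerm, Nat.factorial_succ, Nat.cast_mul, Nat.cast_succ, Nat.add_sub_cancel]
  field_simp

lemma expTerm_mul_expTerm_add_le {x : ℝ} (hx : 0 ≤ x) (k i j : ℕ) :
    expTerm k x * expTerm (k + i + j) x ≤ expTerm (k + i) x * expTerm (k + j) x := by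
  simp only [expTerm]
  rw [div_mul_div_comm, div_mul_div_comm, ← pow_add, ← pow_add,
    show k + (k + i + j) = k + i + (k + j) by ring]
  refine div_le_div_of_nonneg_left (by positivity) (by positivity) ?_
  exact_mod_cast factorial_add_mul_factorial_add_le k i j

lemma summable_expTerm_add (k : ℕ) (x : ℝ) : Summable fun i => expTerm (k + i) x := by
  simpa only [expTerm, add_comm k] using
    (summable_nat_add_iff k).2 (Real.summable_pow_div_factorial x)

lemma expTail_zero : expTail 0 = Real.exp := by
  funext x
  simp [expTail, expTerm, Real.exp_eq_exp_ℝ, NormedSpace.exp_eq_tsum_div]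

lemma expTail_eq_expTerm_add (k : ℕ) (x : ℝ) :
    expTail k x = expTerm k x + expTail (k + 1) x := by
  simp only [expTail, (summable_expTerm_add k x).tsum_eq_zero_add, add_zero, add_assoc,
    add_comm 1]

lemma expTail_pos (k : ℕ) {x : ℝ} (hx : 0 < x) : 0 < expTail k x :=
  (summable_expTerm_add k x).tsum_pos (fun _ => expTerm_nonneg hx.le _) 0 (expTerm_pos hx _)

lemma hasDerivAt_expTail_succ (k : ℕ) (x : ℝ) :
    HasDerivAt (expTail (k + 1)) (expTail k x) x := by
  have hsub (n : ℕ) : expTail (n + 1) = fun y => expTail n y - expTerm n y := by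
    funext y; rw [expTail_eq_expTerm_add n y]; ring
  induction k with
  | zero =>
    rw [hsub, expTail_zero]
    simpa [expTerm] using (Real.hasDerivAt_exp x).sub_const 1
  | succ n ih =>
    rw [hsub]
    refine (ih.sub (hasDerivAt_expTerm_succ n x)).congr_deriv ?_
    rw [expTail_eq_expTerm_add n x, add_sub_cancel_left]

lemma succ_mul_expTerm_mul_le_sum_antidiagonal {x : ℝ} (hx : 0 ≤ x) (k n : ℕ) :
    (n + 1 : ℝ) * (expTerm k x * expTerm (k + n) x)
      ≤ ∑ p ∈ antidiagonal n, expTerm (k + p.1) x * expTerm (k + p.2) x := by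
  have hcard : (n + 1 : ℝ) = #(antidiagonal n) := by simp
  rw [hcard, ← nsmul_eq_mul, ← sum_const]
  refine sum_le_sum fun p hp => ?_
  rw [← mem_antidiagonal.1 hp, ← add_assoc]
  exact expTerm_mul_expTerm_add_le hx k p.1 p.2

lemma summable_expTerm_mul_expTerm {x : ℝ} (hx : 0 ≤ x) (k : ℕ) :
    Summable fun p : ℕ × ℕ => expTerm (k + p.1) x * expTerm (k + p.2) x :=
  (summable_expTerm_add k x).mul_of_nonneg (summable_expTerm_add k x)
    (fun _ => expTerm_nonneg hx _) (fun _ => expTerm_nonneg hx _)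

lemma summable_sum_antidiagonal_expTerm_mul_expTerm {x : ℝ} (hx : 0 ≤ x) (k : ℕ) :
    Summable fun n => ∑ p ∈ antidiagonal n, expTerm (k + p.1) x * expTerm (k + p.2) x :=
  summable_sum_mul_antidiagonal_of_summable_mul (f := fun i => expTerm (k + i) x)
    (g := fun i => expTerm (k + i) x) (summable_expTerm_mul_expTerm hx k)

lemma summable_succ_mul_expTerm_mul {x : ℝ} (hx : 0 ≤ x) (k : ℕ) :
    Summable fun n : ℕ => (n + 1 : ℝ) * (expTerm k x * expTerm (k + n) x) :=
  .of_nonneg_of_le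
    (fun n => mul_nonneg n.cast_add_one_pos.le
      (mul_nonneg (expTerm_nonneg hx _) (expTerm_nonneg hx _)))
    (succ_mul_expTerm_mul_le_sum_antidiagonal hx k)
    (summable_sum_antidiagonal_expTerm_mul_expTerm hx k)

lemma tsum_succ_mul_expTerm_mul_le_sq {x : ℝ} (hx : 0 ≤ x) (k : ℕ) :
    ∑' n : ℕ, (n + 1 : ℝ) * (expTerm k x * expTerm (k + n) x) ≤ expTail k x ^ 2 := by
  rw [sq, expTail, (summable_expTerm_add k x).tsum_mul_tsum_eq_tsum_sum_antidiagonal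
    (summable_expTerm_add k x) (summable_expTerm_mul_expTerm hx k)]
  exact (summable_succ_mul_expTerm_mul hx k).tsum_le_tsum
    (succ_mul_expTerm_mul_le_sum_antidiagonal hx k)
    (summable_sum_antidiagonal_expTerm_mul_expTerm hx k)

lemma add_two_mul_expTerm_mul_expTerm (n j : ℕ) (x : ℝ) :
    ((n : ℝ) + j + 2) * (expTerm n x * expTerm (n + 2 + j) x)
      = (n + 1) * (expTerm (n + 1) x * expTerm (n + 1 + j) x) := by
  have h₁ := mul_expTerm n x
  have h₂ := mul_expTerm (n + 1 + j) x
  push_cast at h₂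
  rw [show n + 1 + j + 1 = n + 2 + j by ring] at h₂
  linear_combination expTerm (n + 1 + j) x * h₁ - expTerm n x * h₂

lemma succ_mul_expTerm_mul_expTail_sub_eq_tsum (n : ℕ) (x : ℝ) :
    (n + 1 : ℝ) * (expTerm (n + 1) x * expTail (n + 1) x - expTerm n x * expTail (n + 2) x)
      = ∑' j : ℕ, (j + 1 : ℝ) * (expTerm n x * expTerm (n + 2 + j) x) := by
  rw [expTail, expTail, ← tsum_mul_left, ← tsum_mul_left,
    ← ((summable_expTerm_add _ x).mul_left _).tsum_sub ((summable_expTerm_add _ x).mul_left _),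
    ← tsum_mul_left]
  congr 1 with j
  linear_combination -add_two_mul_expTerm_mul_expTerm n j x

lemma succ_mul_expTerm_mul_expTail_sub_lt_sq (n : ℕ) {x : ℝ} (hx : 0 < x) :
    (n + 1 : ℝ) * (expTerm (n + 1) x * expTail (n + 1) x - expTerm n x * expTail (n + 2) x)
      < expTail (n + 1) x ^ 2 := by
  have hlt (j : ℕ) : expTerm n x * expTerm (n + 2 + j) x
      < expTerm (n + 1) x * expTerm (n + 1 + j) x := by
    have hpos := mul_pos (expTerm_pos hx n) (expTerm_pos hx (n + 2 + j))
    nlinarith [add_two_mul_expTerm_mul_expTerm n j x, (j.cast_nonneg : (0 : ℝ) ≤ j)]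
  rw [succ_mul_expTerm_mul_expTail_sub_eq_tsum]
  calc ∑' j : ℕ, (j + 1 : ℝ) * (expTerm n x * expTerm (n + 2 + j) x)
      < ∑' j : ℕ, (j + 1 : ℝ) * (expTerm (n + 1) x * expTerm (n + 1 + j) x) :=
        (summable_succ_mul_expTerm_mul hx.le (n + 1)).tsum_lt_tsum_of_nonneg (i := 0)
          (fun j => mul_nonneg j.cast_add_one_pos.le
            (mul_nonneg (expTerm_nonneg hx.le _) (expTerm_nonneg hx.le _)))
          (fun j => mul_le_mul_of_nonneg_left (hlt j).le j.cast_add_one_pos.le)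
          (mul_lt_mul_of_pos_left (hlt 0) (Nat.cast_add_one_pos 0))
    _ ≤ expTail (n + 1) x ^ 2 := tsum_succ_mul_expTerm_mul_le_sq hx.le (n + 1)

lemma gPo_succ (n : ℕ) :
    gPo (n + 1) = fun y =>
      ((n + 1) * expTerm (n + 1) y + y * expTail (n + 1) y) / expTail (n + 1) y := by
  funext y
  rw [gPo, fPo_eq_exp_mul_expTail, fPo_eq_exp_mul_expTail, Nat.add_sub_cancel, mul_left_comm y,
    mul_div_mul_left _ _ (Real.exp_ne_zero _), expTail_eq_expTerm_add n y, mul_add, mul_expTerm]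

lemma hasDerivAt_gPo_succ (n : ℕ) {x : ℝ} (hx : 0 < x) :
    HasDerivAt (gPo (n + 1))
      ((expTail (n + 1) x ^ 2 - (n + 1) * (expTerm (n + 1) x * expTail (n + 1) x
        - expTerm n x * expTail (n + 2) x)) / expTail (n + 1) x ^ 2) x := by
  have hS := (expTail_pos (n + 1) hx).ne'
  rw [gPo_succ]
  refine ((((hasDerivAt_expTerm_succ n x).const_mul (n + 1 : ℝ)).add
    ((hasDerivAt_id x).mul (hasDerivAt_expTail_succ n x))).div
    (hasDerivAt_expTail_succ n x) hS).congr_deriv ?_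
  dsimp only [Pi.add_apply, Pi.mul_apply, id]
  rw [expTail_eq_expTerm_add n x, expTail_eq_expTerm_add (n + 1) x]
  field_simp
  ring

theorem stmt0 (k : ℕ) (hk : 1 ≤ k) :
    (∀ x : ℝ, 0 < x → ∃ d : ℝ, HasDerivAt (gPo k) d x ∧ 0 < d) ∧
      StrictMonoOn (gPo k) (Set.Ioi (0 : ℝ)) := by
  obtain ⟨n, rfl⟩ := Nat.exists_eq_add_of_le' hk
  have hderiv (x : ℝ) (hx : 0 < x) : ∃ d : ℝ, HasDerivAt (gPo (n + 1)) d x ∧ 0 < d :=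
    ⟨_, hasDerivAt_gPo_succ n hx, div_pos (sub_pos.2 (succ_mul_expTerm_mul_expTail_sub_lt_sq n hx))
      (pow_pos (expTail_pos _ hx) 2)⟩
  refine ⟨hderiv, strictMonoOn_of_deriv_pos (convex_Ioi 0) ?_ ?_⟩
  · intro y hy
    exact (hderiv y hy).choose_spec.1.continuousAt.continuousWithinAt
  · intro y hy
    rw [interior_Ioi] at hy
    obtain ⟨d, hd, hd_pos⟩ := hderiv y hy
    rwa [hd.deriv]
end

section
/- Fix an integer k ≥ 1 and define g_k(x) = x·f_{k−1}(x)/f_k(x) for x > 0. Then for every x > 0 one has g_k(x) > k. -/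
/-! Since `x · x^n/n! = (n+1) · x^(n+1)/(n+1)!`, the series `x · f_{k-1}(x)` has terms
`(k + i) · x^(k+i)/(k+i)!`, which dominate the terms `k · x^(k+i)/(k+i)!` of `k · f_k(x)`,
strictly from `i = 1` on. -/

lemma summable_pow_add_div_factorial (k : ℕ) (x : ℝ) :
    Summable fun i : ℕ => x ^ (k + i) / ((k + i).factorial : ℝ) := by
  simpa only [add_comm k] using
    (summable_nat_add_iff k).2 (Real.summable_pow_div_factorial x)

lemma fPo_pos (k : ℕ) {x : ℝ} (hx : 0 < x) : 0 < fPo k x :=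
  mul_pos (Real.exp_pos _) <| (summable_pow_add_div_factorial k x).tsum_pos
    (fun _ => by positivity) 0 (by positivity)

lemma mul_pow_div_factorial (n : ℕ) (x : ℝ) :
    x * (x ^ n / (n.factorial : ℝ)) = ((n + 1 : ℕ) : ℝ) * (x ^ (n + 1) / ((n + 1).factorial : ℝ)) := by
  rw [Nat.factorial_succ, pow_succ]
  push_cast
  field_simp

lemma succ_mul_fPo_succ_lt (m : ℕ) {x : ℝ} (hx : 0 < x) :
    ((m + 1 : ℕ) : ℝ) * fPo (m + 1) x < x * fPo m x := by
  set t : ℕ → ℝ := fun i => x ^ (m + 1 + i) / ((m + 1 + i).factorial : ℝ)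
  have hshift (i : ℕ) : x * (x ^ (m + i) / ((m + i).factorial : ℝ)) = ((m + 1 + i : ℕ) : ℝ) * t i := by
    rw [mul_pow_div_factorial, Nat.add_right_comm]
  have ht (i : ℕ) : 0 < t i := by positivity
  have hsum : ∑' i, ((m + 1 : ℕ) : ℝ) * t i < ∑' i, x * (x ^ (m + i) / ((m + i).factorial : ℝ)) := by
    refine Summable.tsum_lt_tsum (i := 1) (fun i => ?_) ?_
      ((summable_pow_add_div_factorial (m + 1) x).mul_left _)
      ((summable_pow_add_div_factorial m x).mul_left x)
    · rw [hshift]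
      exact mul_le_mul_of_nonneg_right (Nat.cast_le.2 (Nat.le_add_right _ _)) (ht i).le
    · rw [hshift]
      exact mul_lt_mul_of_pos_right (by exact_mod_cast Nat.lt_succ_self _) (ht 1)
  simp only [fPo, t, tsum_mul_left] at hsum ⊢
  nlinarith [Real.exp_pos (-x)]

theorem stmt2 (k : ℕ) (hk : 1 ≤ k) :
    ∀ x : ℝ, 0 < x → (k : ℝ) < gPo k x := by
  obtain ⟨m, rfl⟩ : ∃ m, k = m + 1 := ⟨k - 1, by omega⟩
  intro x hx
  rw [gPo, lt_div_iff₀ (fPo_pos (m + 1) hx), Nat.add_sub_cancel]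
  exact succ_mul_fPo_succ_lt m hx
end

section
/- Fix an integer k ≥ 2. The function λ ↦ e^{−λ} λ^{k−1} / (f_{k−1}(λ)·(k−1)!) is strictly decreasing on (0, ∞); that is, for all 0 < λ₁ < λ₂ one has e^{−λ₂} λ₂^{k−1} / (f_{k−1}(λ₂)·(k−1)!) < e^{−λ₁} λ₁^{k−1} / (f_{k−1}(λ₁)·(k−1)!). -/
/-- `htil k λ = e^{-λ} λ^{k-1} / (f_{k-1}(λ) (k-1)!)`. -/
noncomputable def htil (k : ℕ) (l : ℝ) : ℝ :=
  Real.exp (-l) * l ^ (k - 1) / (fPo (k - 1) l * (Nat.factorial (k - 1) : ℝ))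

/-!
Dividing numerator and denominator by `e^{-λ} λ^{k-1}` gives
`htil k λ = 1 / ((k-1)! ∑_{i ≥ 0} λ^i / (k-1+i)!)`, and the power series in the
denominator has nonnegative coefficients and a positive linear term, so it is strictly
increasing and positive on `[0, ∞)`.
-/

open Nat

noncomputable def shiftedExpSeries (m : ℕ) (x : ℝ) : ℝ :=
  ∑' i : ℕ, x ^ i / ((m + i)! : ℝ)

lemma summable_pow_div_factorial_add (m : ℕ) (x : ℝ) :
    Summable (fun i : ℕ => x ^ i / ((m + i)! : ℝ)) := by
  refine .of_norm_bounded (Real.summable_pow_div_factorial |x|) fun i => ?_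
  rw [norm_div, norm_pow, Real.norm_eq_abs, RCLike.norm_natCast]
  gcongr
  exact Nat.le_add_left i m

lemma shiftedExpSeries_pos (m : ℕ) {x : ℝ} (hx : 0 ≤ x) : 0 < shiftedExpSeries m x :=
  calc (0 : ℝ) < x ^ 0 / ((m + 0)! : ℝ) := by positivity
    _ ≤ shiftedExpSeries m x :=
      (summable_pow_div_factorial_add m x).le_tsum 0 fun i _ => by positivity

lemma strictMonoOn_shiftedExpSeries (m : ℕ) : StrictMonoOn (shiftedExpSeries m) (Set.Ici 0) := by
  intro x (hx : 0 ≤ x) y _ hxy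
  refine Summable.tsum_lt_tsum (i := 1) (fun i => ?_) ?_
    (summable_pow_div_factorial_add m x) (summable_pow_div_factorial_add m y)
  · gcongr
  · gcongr

lemma tsum_pow_add_div_factorial (m : ℕ) (x : ℝ) :
    ∑' i : ℕ, x ^ (m + i) / ((m + i)! : ℝ) = x ^ m * shiftedExpSeries m x := by
  rw [shiftedExpSeries, ← tsum_mul_left]
  simp only [pow_add, mul_div_assoc]

lemma htil_eq_inv (k : ℕ) {l : ℝ} (hl : l ≠ 0) :
    htil k l = ((k - 1)! * shiftedExpSeries (k - 1) l)⁻¹ := by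
  rw [htil, fPo, tsum_pow_add_div_factorial]
  field_simp

lemma strictAntiOn_htil (k : ℕ) : StrictAntiOn (htil k) (Set.Ioi 0) := by
  intro x (hx : 0 < x) y (hy : 0 < y) hxy
  rw [htil_eq_inv k hx.ne', htil_eq_inv k hy.ne']
  have hpos := shiftedExpSeries_pos (k - 1) hx.le
  gcongr
  exact strictMonoOn_shiftedExpSeries (k - 1) (Set.mem_Ici.2 hx.le) (Set.mem_Ici.2 hy.le) hxy

theorem stmt3_general (k : ℕ) :
    ∀ l₁ l₂ : ℝ, 0 < l₁ → l₁ < l₂ → htil k l₂ < htil k l₁ :=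
  fun _ _ h₁ h₁₂ => strictAntiOn_htil k h₁ (h₁.trans h₁₂) h₁₂

theorem stmt3 (k : ℕ) (hk : 2 ≤ k) :
    ∀ l₁ l₂ : ℝ, 0 < l₁ → l₁ < l₂ → htil k l₂ < htil k l₁ :=
  stmt3_general k
end

section
/- Let μ be a real number and k a nonnegative integer with k < ⌊μ⌋ (k strictly less than the integer floor of μ). Then f_k(μ) > 1/2. -/
lemma fact_aux : ∀ (d j : ℕ), Nat.factorial (j + d + 1 + d) ≤ Nat.factorial j * (j + d + 1) ^ (2 * d + 1) := by
  intro d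
  induction d with
  | zero => intro j; simp [Nat.factorial_succ, Nat.mul_comm]
  | succ d ih =>
    intro j
    have h1 := ih (j + 1)
    have key : (j + 2 * d + 3) * (j + 1) ≤ (j + d + 2) ^ 2 := by nlinarith
    have e1 : j + (d + 1) + 1 + (d + 1) = (j + 1 + d + 1 + d) + 1 := by ring
    rw [e1, Nat.factorial_succ]
    have e2 : j + 1 + d + 1 + d + 1 = j + 2 * d + 3 := by ring
    calc (j + 1 + d + 1 + d + 1) * Nat.factorial (j + 1 + d + 1 + d)
        ≤ (j + 2 * d + 3) * (Nat.factorial (j + 1) * (j + 1 + d + 1) ^ (2 * d + 1)) := by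
          rw [e2]; exact Nat.mul_le_mul_left _ h1
      _ = ((j + 2 * d + 3) * (j + 1)) * (Nat.factorial j * (j + d + 2) ^ (2 * d + 1)) := by
          rw [Nat.factorial_succ]; ring_nf
      _ ≤ (j + d + 2) ^ 2 * (Nat.factorial j * (j + d + 2) ^ (2 * d + 1)) :=
          Nat.mul_le_mul_right _ key
      _ = Nat.factorial j * (j + (d + 1) + 1) ^ (2 * (d + 1) + 1) := by ring

theorem stmt5 (μ : ℝ) (k : ℕ) (hk : (k : ℤ) < ⌊μ⌋) :
    1 / 2 < fPo k μ := by
  have hμ1 : (k : ℝ) + 1 ≤ μ := by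
    have h := Int.le_floor.mp (show (k:ℤ) + 1 ≤ ⌊μ⌋ by omega)
    push_cast at h; linarith
  have hμ0 : 0 < μ := by
    have : (0:ℝ) ≤ (k:ℝ) := Nat.cast_nonneg k
    linarith
  set f : ℕ → ℝ := fun i => μ ^ i / (Nat.factorial i : ℝ) with hf
  have hf0 : ∀ i, 0 ≤ f i := fun i => by positivity
  have hsum : Summable f := Real.summable_pow_div_factorial μ
  have htot : ∑' i, f i = Real.exp μ := by
    rw [Real.exp_eq_exp_ℝ, NormedSpace.exp_eq_tsum_div]
  have hsumtail : Summable (fun i => f (k + i)) := by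
    have := (summable_nat_add_iff k).mpr hsum
    simpa [add_comm] using this
  have hsplit : ∑ i ∈ Finset.range k, f i + ∑' i, f (k + i) = Real.exp μ := by
    rw [← htot, ← Summable.sum_add_tsum_nat_add k hsum]
    congr 1
    exact tsum_congr fun i => by rw [add_comm]
  set T : ℝ := ∑' i, f (k + i) with hT
  have hfPo : fPo k μ = Real.exp (-μ) * T := rfl
  -- key strict inequality
  have hS : ∑ i ∈ Finset.range k, f i < T := by
    rcases Nat.eq_zero_or_pos k with hk0 | hk0
    · subst hk0
      simp only [Finset.range_zero, Finset.sum_empty]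
      have : T = Real.exp μ := by
        rw [hT, ← htot]
        exact tsum_congr fun i => by simp
      rw [this]; exact Real.exp_pos μ
    · have hkμ : (k : ℝ) < μ := by linarith
      have hstrict : ∀ j ∈ Finset.range k, f j < f (k + (k - 1 - j)) := by
        intro j hj
        rw [Finset.mem_range] at hj
        obtain ⟨d, hd⟩ : ∃ d, k = j + d + 1 := ⟨k - j - 1, by omega⟩
        have hidx : k + (k - 1 - j) = j + 2 * d + 1 := by omega
        rw [hidx]
        have hfac : (Nat.factorial (j + 2 * d + 1) : ℝ) ≤ (Nat.factorial j : ℝ) * ((j + d + 1 : ℕ) : ℝ) ^ (2 * d + 1) := by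
          have := fact_aux d j
          have e : j + d + 1 + d = j + 2 * d + 1 := by ring
          rw [e] at this
          exact_mod_cast this
        have hbase : ((j + d + 1 : ℕ) : ℝ) < μ := by
          rw [← hd]; exact hkμ
        have hpow : ((j + d + 1 : ℕ) : ℝ) ^ (2 * d + 1) < μ ^ (2 * d + 1) :=
          pow_lt_pow_left₀ hbase (by positivity) (by omega)
        have hfj : (0:ℝ) < Nat.factorial j := by exact_mod_cast Nat.factorial_pos j
        have hfk : (0:ℝ) < Nat.factorial (j + 2 * d + 1) := by exact_mod_cast Nat.factorial_pos _
        have hμj : (0:ℝ) < μ ^ j := pow_pos hμ0 j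
        show μ ^ j / _ < μ ^ (j + 2 * d + 1) / _
        rw [div_lt_div_iff₀ hfj hfk]
        calc μ ^ j * (Nat.factorial (j + 2 * d + 1) : ℝ)
            ≤ μ ^ j * ((Nat.factorial j : ℝ) * ((j + d + 1 : ℕ) : ℝ) ^ (2 * d + 1)) := by
              apply mul_le_mul_of_nonneg_left hfac (le_of_lt hμj)
          _ < μ ^ j * ((Nat.factorial j : ℝ) * μ ^ (2 * d + 1)) := by
              apply mul_lt_mul_of_pos_left _ hμj
              exact mul_lt_mul_of_pos_left hpow hfj
          _ = μ ^ (j + 2 * d + 1) * (Nat.factorial j : ℝ) := by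
              rw [pow_add]; ring
      calc ∑ i ∈ Finset.range k, f i
          < ∑ j ∈ Finset.range k, f (k + (k - 1 - j)) :=
            Finset.sum_lt_sum_of_nonempty (Finset.nonempty_range_iff.mpr (by omega)) hstrict
        _ = ∑ d ∈ Finset.range k, f (k + d) := Finset.sum_range_reflect (fun d => f (k + d)) k
        _ ≤ T := Summable.sum_le_tsum (Finset.range k) (fun i _ => hf0 _) hsumtail
  have hT2 : Real.exp μ / 2 < T := by linarith
  rw [hfPo]
  have hexp : Real.exp (-μ) * (Real.exp μ / 2) = 1 / 2 := by
    rw [← mul_div_assoc, ← Real.exp_add]; simp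
  calc (1:ℝ)/2 = Real.exp (-μ) * (Real.exp μ / 2) := hexp.symm
    _ < Real.exp (-μ) * T := by
        exact mul_lt_mul_of_pos_left hT2 (Real.exp_pos _)
end

section
/- Let μ be a real number and let M, i be positive integers with 1 ≤ i ≤ M and M ≤ μ − 1. Then e^{−μ} μ^{M−i}/(M−i)! ≤ e^{−i/μ} · e^{−μ} μ^{M+i}/(M+i)!. In particular, the Poisson(μ) probability mass at M − i is at most the Poisson(μ) probability mass at M + i. -/
/-!
Comparing the two masses amounts to `(M + i)! / (M - i)! ≤ e^{-i/μ} μ^{2i}`. The quotient is the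
product of the `i` pairs `(M - k + 1)(M + k) ≤ M (M + 1)`, and `M (M + 1) ≤ (μ - 1) μ ≤ μ² e^{-1/μ}`
by `1 - x ≤ e^{-x}`.
-/

open Real Nat

theorem Nat.factorial_add_le_pow_mul_factorial_sub {M i : ℕ} (hiM : i ≤ M) :
    (M + i)! ≤ (M * (M + 1)) ^ i * (M - i)! := by
  induction i with
  | zero => simp
  | succ n ih =>
    obtain ⟨k, rfl⟩ : ∃ k, M = n + 1 + k := ⟨M - (n + 1), by omega⟩
    have hsub : n + 1 + k - n = (k + 1) := by omega
    have hsub' : n + 1 + k - (n + 1) = k := by omega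
    have hpair : (n + 1 + k + n + 1) * (k + 1) ≤ (n + 1 + k) * (n + 1 + k + 1) := by nlinarith
    calc (n + 1 + k + (n + 1))! = (n + 1 + k + n + 1) * (n + 1 + k + n)! := Nat.factorial_succ _
      _ ≤ (n + 1 + k + n + 1) * (((n + 1 + k) * (n + 1 + k + 1)) ^ n * (k + 1)!) := by
          rw [← hsub]; exact Nat.mul_le_mul_left _ (ih (by omega))
      _ = ((n + 1 + k + n + 1) * (k + 1)) * ((n + 1 + k) * (n + 1 + k + 1)) ^ n * k ! := by
          rw [Nat.factorial_succ]; ring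
      _ ≤ ((n + 1 + k) * (n + 1 + k + 1)) * ((n + 1 + k) * (n + 1 + k + 1)) ^ n * k ! := by
          gcongr
      _ = ((n + 1 + k) * (n + 1 + k + 1)) ^ (n + 1) * (n + 1 + k - (n + 1))! := by
          rw [hsub']; ring

theorem Real.sub_one_mul_le_sq_mul_exp_neg_inv {μ : ℝ} (hμ : 0 < μ) :
    (μ - 1) * μ ≤ μ ^ 2 * exp (-μ⁻¹) := by
  have h := add_one_le_exp (-μ⁻¹)
  calc (μ - 1) * μ = μ ^ 2 * (-μ⁻¹ + 1) := by field_simp; ring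
    _ ≤ μ ^ 2 * exp (-μ⁻¹) := by gcongr

theorem factorial_add_le_exp_mul_pow_mul_factorial_sub {μ : ℝ} {M i : ℕ} (hiM : i ≤ M)
    (hM : (M : ℝ) ≤ μ - 1) :
    ((M + i)! : ℝ) ≤ exp (-(i / μ)) * μ ^ (2 * i) * (M - i)! := by
  have hμ : 0 < μ := by linarith [M.cast_nonneg (α := ℝ)]
  have hpair : (M : ℝ) * (M + 1) ≤ μ ^ 2 * exp (-μ⁻¹) :=
    calc (M : ℝ) * (M + 1) ≤ (μ - 1) * μ := by gcongr <;> linarith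
      _ ≤ μ ^ 2 * exp (-μ⁻¹) := sub_one_mul_le_sq_mul_exp_neg_inv hμ
  calc ((M + i)! : ℝ) ≤ ((M : ℝ) * (M + 1)) ^ i * (M - i)! := by
        exact_mod_cast Nat.factorial_add_le_pow_mul_factorial_sub hiM
    _ ≤ (μ ^ 2 * exp (-μ⁻¹)) ^ i * (M - i)! := by gcongr
    _ = exp (-(i / μ)) * μ ^ (2 * i) * (M - i)! := by
        rw [mul_pow, ← exp_nat_mul, pow_mul]; ring_nf

theorem stmt6_general (μ : ℝ) (M i : ℕ) (hiM : i ≤ M) (hM : (M : ℝ) ≤ μ - 1) :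
    Real.exp (-μ) * μ ^ (M - i) / (Nat.factorial (M - i) : ℝ) ≤
      Real.exp (-((i : ℝ) / μ)) *
        (Real.exp (-μ) * μ ^ (M + i) / (Nat.factorial (M + i) : ℝ)) := by
  have hμ : 0 < μ := by linarith [M.cast_nonneg (α := ℝ)]
  have hpow : μ ^ (M + i) = μ ^ (M - i) * μ ^ (2 * i) := by rw [← pow_add]; congr 1; omega
  rw [hpow, mul_div_assoc', div_le_div_iff₀ (by positivity) (by positivity)]
  calc exp (-μ) * μ ^ (M - i) * ((M + i)! : ℝ)
      ≤ exp (-μ) * μ ^ (M - i) * (exp (-(i / μ)) * μ ^ (2 * i) * (M - i)!) := by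
        gcongr; exact factorial_add_le_exp_mul_pow_mul_factorial_sub hiM hM
    _ = exp (-(i / μ)) * (exp (-μ) * (μ ^ (M - i) * μ ^ (2 * i))) * (M - i)! := by ring

theorem stmt6 (μ : ℝ) (M i : ℕ) (hi : 1 ≤ i) (hiM : i ≤ M) (hM : (M : ℝ) ≤ μ - 1) :
    Real.exp (-μ) * μ ^ (M - i) / (Nat.factorial (M - i) : ℝ) ≤
      Real.exp (-((i : ℝ) / μ)) *
        (Real.exp (-μ) * μ ^ (M + i) / (Nat.factorial (M + i) : ℝ)) :=
  stmt6_general μ M i hiM hM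
end

section
/- Fix integers k, r ≥ 2 with (r, k) ≠ (2, 2), let h_{r,k}(μ) = μ / f_{k−1}(μ)^{r−1}, and suppose μ > 0 is a critical point of h_{r,k} (the derivative of h_{r,k} at μ is 0). Define α = f_k(μ), β = (1/r)·μ·f_{k−1}(μ), and ρ̄ = e^{−μ} μ^k / (f_k(μ)·k!). Then (k·ρ̄·α)/(r·β) = 1/((r−1)(k−1)). -/
/-- `hFun r k μ = μ / f_{k-1}(μ)^{r-1}`. -/
noncomputable def hFun (r k : ℕ) (μ : ℝ) : ℝ := μ / (fPo (k - 1) μ) ^ (r - 1)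

open Nat

theorem fPo_eq_one_sub (k : ℕ) (μ : ℝ) :
    fPo k μ = 1 - Real.exp (-μ) * ∑ i ∈ Finset.range k, μ ^ i / i ! := by
  have hexp : Real.exp μ = ∑' n : ℕ, μ ^ n / n ! := by
    rw [Real.exp_eq_exp_ℝ, NormedSpace.exp_eq_tsum_div]
  have htail : ∑' i : ℕ, μ ^ (k + i) / (k + i) ! =
      Real.exp μ - ∑ i ∈ Finset.range k, μ ^ i / i ! := by
    rw [hexp, ← (Real.summable_pow_div_factorial μ).sum_add_tsum_nat_add k]
    simp only [add_comm k, add_sub_cancel_left]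
  rw [fPo, htail, mul_sub, ← Real.exp_add, neg_add_cancel, Real.exp_zero]

theorem fPo_pos_s11 (k : ℕ) {μ : ℝ} (hμ : 0 < μ) : 0 < fPo k μ := by
  have hs : Summable fun i ↦ μ ^ (k + i) / (k + i) ! := by
    simpa only [add_comm k] using
      (summable_nat_add_iff k).2 (Real.summable_pow_div_factorial μ)
  exact mul_pos (Real.exp_pos _) (hs.tsum_pos (fun i ↦ by positivity) 0 (by positivity))

theorem hasDerivAt_sum_range_succ_pow_div_factorial (k : ℕ) (μ : ℝ) :
    HasDerivAt (fun x : ℝ ↦ ∑ i ∈ Finset.range (k + 1), x ^ i / i !)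
      (∑ i ∈ Finset.range k, μ ^ i / i !) μ := by
  have hterm (i : ℕ) : HasDerivAt (fun x : ℝ ↦ x ^ (i + 1) / (i + 1) !) (μ ^ i / i !) μ := by
    refine ((hasDerivAt_pow (i + 1) μ).div_const ((i + 1) ! : ℝ)).congr_deriv ?_
    rw [Nat.factorial_succ]
    push_cast
    field_simp
  simp only [Finset.sum_range_succ' _ k, pow_zero, Nat.factorial_zero, Nat.cast_one, div_one]
  exact (HasDerivAt.fun_sum fun i _ ↦ hterm i).add_const 1

theorem hasDerivAt_fPo_succ (k : ℕ) (μ : ℝ) :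
    HasDerivAt (fPo (k + 1)) (Real.exp (-μ) * μ ^ k / k !) μ := by
  have hexp : HasDerivAt (fun x : ℝ ↦ Real.exp (-x)) (-Real.exp (-μ)) μ := by
    simpa using (hasDerivAt_neg μ).exp
  have h := ((hexp.mul (hasDerivAt_sum_range_succ_pow_div_factorial k μ)).const_sub 1)
  rw [funext (fPo_eq_one_sub (k + 1))]
  refine h.congr_deriv ?_
  rw [Finset.sum_range_succ]
  ring

theorem fPo_eq_of_deriv_hFun_eq_zero (m n : ℕ) {μ : ℝ} (hμ : 0 < μ)
    (hcrit : deriv (hFun (m + 2) (n + 2)) μ = 0) :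
    fPo (n + 1) μ = (m + 1) * μ * (Real.exp (-μ) * μ ^ n / n !) := by
  set F := fPo (n + 1) μ
  set p := Real.exp (-μ) * μ ^ n / (n ! : ℝ)
  have hF : 0 < F := fPo_pos_s11 _ hμ
  have hderiv : HasDerivAt (hFun (m + 2) (n + 2))
      ((1 * F ^ (m + 1) - μ * ((m + 1 : ℕ) * F ^ m * p)) / (F ^ (m + 1)) ^ 2) μ :=
    (hasDerivAt_id μ).div ((hasDerivAt_fPo_succ n μ).pow (m + 1)) (by positivity)
  rw [hderiv.deriv, div_eq_zero_iff, sub_eq_zero] at hcrit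
  have hnum := hcrit.resolve_right (by positivity)
  rw [one_mul, pow_succ, mul_comm _ F] at hnum
  push_cast at hnum
  apply mul_right_cancel₀ (pow_pos hF m).ne'
  linear_combination hnum

theorem stmt11_general (k r : ℕ) (hk : 2 ≤ k) (hr : 2 ≤ r)
    (μ : ℝ) (hμ : 0 < μ) (hcrit : deriv (hFun r k) μ = 0) :
    ((k : ℝ) * (Real.exp (-μ) * μ ^ k / (fPo k μ * (Nat.factorial k : ℝ))) * fPo k μ) /
        ((r : ℝ) * ((1 / (r : ℝ)) * μ * fPo (k - 1) μ)) =
      1 / (((r : ℝ) - 1) * ((k : ℝ) - 1)) := by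
  obtain ⟨n, rfl⟩ : ∃ n, k = n + 2 := ⟨k - 2, by omega⟩
  obtain ⟨m, rfl⟩ : ∃ m, r = m + 2 := ⟨r - 2, by omega⟩
  have hFk : fPo (n + 2) μ ≠ 0 := (fPo_pos_s11 _ hμ).ne'
  rw [show n + 2 - 1 = n + 1 from rfl, fPo_eq_of_deriv_hFun_eq_zero m n hμ hcrit,
    Nat.factorial_succ, Nat.factorial_succ]
  push_cast
  rw [show (m : ℝ) + 2 - 1 = m + 1 by ring, show (n : ℝ) + 2 - 1 = n + 1 by ring]
  field_simp
  ring

theorem stmt11 (k r : ℕ) (hk : 2 ≤ k) (hr : 2 ≤ r) (hne : ¬(r = 2 ∧ k = 2))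
    (μ : ℝ) (hμ : 0 < μ) (hcrit : deriv (hFun r k) μ = 0) :
    ((k : ℝ) * (Real.exp (-μ) * μ ^ k / (fPo k μ * (Nat.factorial k : ℝ))) * fPo k μ) /
        ((r : ℝ) * ((1 / (r : ℝ)) * μ * fPo (k - 1) μ)) =
      1 / (((r : ℝ) - 1) * ((k : ℝ) - 1)) :=
  stmt11_general k r hk hr μ hμ hcrit
end

section
/- Let (Ω, 𝔉, P) be a probability space equipped with a filtration (𝔉_i)_{i∈ℕ}, and let (X_i)_{i∈ℕ} be a real-valued process adapted to (𝔉_i), with each X_i integrable. Let a be a real number and c ≥ 0 a real number such that, almost surely, for every i ≥ 0: E[X_{i+1} | 𝔉_i] ≤ X_i + a and |X_{i+1} − X_i| ≤ c. Then for every integer t ≥ 1 and every real j ≥ 0: P(X_t − X_0 ≥ t·a + j) ≤ exp(−j² / (2t(c + |a|)²)). -/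
/-!
The process `Y i = X i - i * a` is a supermartingale whose increments are bounded by
`b = c + |a|`. Since `exp` is convex, on `[-b, b]` it lies below its chord, so conditionally on
`ℱ i` the increment `D` satisfies `E[exp (λ D) | ℱ i] ≤ cosh (λ b) + (sinh (λ b) / b) E[D | ℱ i]
≤ cosh (λ b) ≤ exp (λ² b² / 2)`. Pulling out the `ℱ i`-measurable factor and iterating gives
`E[exp (λ (Y t - Y 0))] ≤ exp (t λ² b² / 2)`, and Chernoff's bound with `λ = j / (t b²)` yields
the Azuma–Hoeffding tail bound.
-/

open MeasureTheory ProbabilityTheory Real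

lemma exp_mul_le_cosh_add_sinh_div_mul {b l d : ℝ} (hd : |d| ≤ b) :
    exp (l * d) ≤ cosh (l * b) + sinh (l * b) / b * d := by
  obtain ⟨hdl, hdu⟩ := abs_le.1 hd
  rcases (abs_nonneg d).trans hd |>.eq_or_lt with rfl | hb
  · obtain rfl : d = 0 := by linarith
    simp
  have hsum : (b - d) / (2 * b) + (b + d) / (2 * b) = 1 := by field_simp; ring
  have hconv := convexOn_exp.2 (Set.mem_univ (-(l * b))) (Set.mem_univ (l * b))
    (div_nonneg (by linarith) (by linarith)) (div_nonneg (by linarith) (by linarith)) hsum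
  have hpt : (b - d) / (2 * b) * -(l * b) + (b + d) / (2 * b) * (l * b) = l * d := by
    field_simp; ring
  simp only [smul_eq_mul, hpt] at hconv
  rw [cosh_eq, sinh_eq]
  refine hconv.trans_eq ?_
  field_simp
  ring

section

variable {Ω : Type*} {m m0 : MeasurableSpace Ω} {μ : Measure Ω}

lemma condExp_exp_mul_le_of_condExp_nonpos [IsFiniteMeasure μ] (hm : m ≤ m0) {D : Ω → ℝ}
    {b l : ℝ} (hb : 0 ≤ b) (hl : 0 ≤ l) (hD : Integrable D μ) (hDb : ∀ᵐ ω ∂μ, |D ω| ≤ b)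
    (hDc : μ[D|m] ≤ᵐ[μ] 0) :
    μ[fun ω ↦ exp (l * D ω)|m] ≤ᵐ[μ] fun _ ↦ exp (l ^ 2 * b ^ 2 / 2) := by
  set A := cosh (l * b)
  set B := sinh (l * b) / b
  have hB : 0 ≤ B := div_nonneg (sinh_nonneg_iff.2 (mul_nonneg hl hb)) hb
  have hchord : (fun ω ↦ exp (l * D ω)) ≤ᵐ[μ] (fun _ ↦ A) + B • D := by
    filter_upwards [hDb] with ω h using exp_mul_le_cosh_add_sinh_div_mul h
  have hlin : μ[(fun _ ↦ A) + B • D|m] =ᵐ[μ] (fun _ ↦ A) + B • μ[D|m] := by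
    filter_upwards [condExp_add (integrable_const A) (hD.smul B) m, condExp_smul (μ := μ) B D m]
      with ω h₁ h₂
    simp [h₁, h₂, condExp_const hm]
  have hint : Integrable (fun ω ↦ exp (l * D ω)) μ :=
    integrable_exp_mul_of_mem_Icc hD.aemeasurable
      (by filter_upwards [hDb] with ω h using abs_le.1 h)
  filter_upwards [condExp_mono (m := m) hint ((integrable_const A).add (hD.smul B)) hchord,
    hlin, hDc] with ω h₁ h₂ h₃
  calc μ[fun ω ↦ exp (l * D ω)|m] ω ≤ A + B * μ[D|m] ω := by simpa [h₂] using h₁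
    _ ≤ A := by nlinarith [show μ[D|m] ω ≤ 0 from h₃]
    _ ≤ exp (l ^ 2 * b ^ 2 / 2) := by rw [← mul_pow]; exact cosh_le_exp_half_sq _

lemma ae_abs_sub_le_mul_of_abs_succ_sub_le {Y : ℕ → Ω → ℝ} {b : ℝ}
    (hinc : ∀ i, ∀ᵐ ω ∂μ, |Y (i + 1) ω - Y i ω| ≤ b) (n : ℕ) :
    ∀ᵐ ω ∂μ, |Y n ω - Y 0 ω| ≤ n * b := by
  induction n with
  | zero => simp
  | succ n ih =>
    filter_upwards [ih, hinc n] with ω h₁ h₂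
    calc |Y (n + 1) ω - Y 0 ω| ≤ |Y (n + 1) ω - Y n ω| + |Y n ω - Y 0 ω| := abs_sub_le _ _ _
      _ ≤ (n + 1 : ℕ) * b := by push_cast; linarith

variable {ℱ : Filtration ℕ m0} {Y : ℕ → Ω → ℝ} {b : ℝ}

namespace MeasureTheory.Supermartingale

lemma condExp_sub_nonpos (hY : Supermartingale Y ℱ μ) {i j : ℕ} (hij : i ≤ j) :
    μ[Y j - Y i|ℱ i] ≤ᵐ[μ] 0 := by
  filter_upwards [hY.neg.condExp_sub_nonneg hij, condExp_neg (μ := μ) (Y j - Y i) (ℱ i)]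
    with ω h₁ h₂
  rw [Pi.neg_apply, Pi.neg_apply, neg_sub_neg, ← neg_sub, h₂] at h₁
  simpa using h₁

lemma integrable_exp_mul_sub [IsFiniteMeasure μ] (hY : Supermartingale Y ℱ μ)
    (hinc : ∀ i, ∀ᵐ ω ∂μ, |Y (i + 1) ω - Y i ω| ≤ b) (l : ℝ) (n : ℕ) :
    Integrable (fun ω ↦ exp (l * (Y n ω - Y 0 ω))) μ :=
  integrable_exp_mul_of_mem_Icc ((hY.integrable n).sub (hY.integrable 0)).aemeasurable
    (by filter_upwards [ae_abs_sub_le_mul_of_abs_succ_sub_le hinc n] with ω h using abs_le.1 h)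

lemma mgf_sub_le [IsProbabilityMeasure μ] (hY : Supermartingale Y ℱ μ) (hb : 0 ≤ b)
    (hinc : ∀ i, ∀ᵐ ω ∂μ, |Y (i + 1) ω - Y i ω| ≤ b) {l : ℝ} (hl : 0 ≤ l) (n : ℕ) :
    mgf (fun ω ↦ Y n ω - Y 0 ω) μ l ≤ exp (n * (l ^ 2 * b ^ 2 / 2)) := by
  induction n with
  | zero => simp
  | succ n ih =>
    set f : Ω → ℝ := fun ω ↦ exp (l * (Y n ω - Y 0 ω))
    set g : Ω → ℝ := fun ω ↦ exp (l * (Y (n + 1) ω - Y n ω))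
    have hfg : (fun ω ↦ exp (l * (Y (n + 1) ω - Y 0 ω))) = f * g := by
      ext ω; simp only [f, g, Pi.mul_apply, ← exp_add]; ring_nf
    have hf : StronglyMeasurable[ℱ n] f := continuous_exp.comp_stronglyMeasurable
      ((((hY.stronglyAdapted n).sub ((hY.stronglyAdapted 0).mono (ℱ.mono n.zero_le)))).const_mul l)
    have hD : Integrable (Y (n + 1) - Y n) μ := (hY.integrable _).sub (hY.integrable _)
    have hg : Integrable g μ := integrable_exp_mul_of_mem_Icc hD.aemeasurable
      (by filter_upwards [hinc n] with ω h using abs_le.1 h)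
    have hcond := condExp_exp_mul_le_of_condExp_nonpos (ℱ.le n) hb hl hD (hinc n)
      (hY.condExp_sub_nonpos n.le_succ)
    have hfg_int : Integrable (f * g) μ := hfg ▸ hY.integrable_exp_mul_sub hinc l (n + 1)
    calc mgf (fun ω ↦ Y (n + 1) ω - Y 0 ω) μ l = ∫ ω, μ[f * g|ℱ n] ω ∂μ := by
          rw [mgf, hfg, integral_condExp (ℱ.le n)]
      _ ≤ ∫ ω, exp (l ^ 2 * b ^ 2 / 2) * f ω ∂μ := by
          refine integral_mono_ae integrable_condExp
            ((hY.integrable_exp_mul_sub hinc l n).const_mul _) ?_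
          filter_upwards [condExp_mul_of_stronglyMeasurable_left hf hfg_int hg, hcond]
            with ω h₁ h₂
          rw [h₁, Pi.mul_apply, mul_comm]
          exact mul_le_mul_of_nonneg_right h₂ (exp_pos _).le
      _ = exp (l ^ 2 * b ^ 2 / 2) * mgf (fun ω ↦ Y n ω - Y 0 ω) μ l := integral_const_mul _ _
      _ ≤ exp (l ^ 2 * b ^ 2 / 2) * exp (n * (l ^ 2 * b ^ 2 / 2)) := by gcongr
      _ = exp ((n + 1 : ℕ) * (l ^ 2 * b ^ 2 / 2)) := by rw [← exp_add]; push_cast; ring_nf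

/-- Azuma–Hoeffding inequality for supermartingales. -/
theorem measureReal_le_sub_le [IsProbabilityMeasure μ] (hY : Supermartingale Y ℱ μ) (hb : 0 ≤ b)
    (hinc : ∀ i, ∀ᵐ ω ∂μ, |Y (i + 1) ω - Y i ω| ≤ b) (n : ℕ) {ε : ℝ} (hε : 0 ≤ ε) :
    μ.real {ω | ε ≤ Y n ω - Y 0 ω} ≤ exp (-ε ^ 2 / (2 * n * b ^ 2)) := by
  rcases (show (0 : ℝ) ≤ n * b ^ 2 by positivity).eq_or_lt with hdeg | hpos
  · rw [mul_assoc, ← hdeg]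
    simp [measureReal_le_one]
  set l := ε / (n * b ^ 2)
  have hl : 0 ≤ l := by positivity
  calc μ.real {ω | ε ≤ Y n ω - Y 0 ω}
      ≤ exp (-l * ε) * mgf (fun ω ↦ Y n ω - Y 0 ω) μ l :=
        measure_ge_le_exp_mul_mgf ε hl (hY.integrable_exp_mul_sub hinc l n)
    _ ≤ exp (-l * ε) * exp (n * (l ^ 2 * b ^ 2 / 2)) := by
        gcongr; exact hY.mgf_sub_le hb hinc hl n
    _ = exp (-ε ^ 2 / (2 * n * b ^ 2)) := by
        rw [← exp_add]; congr 1; simp only [l]; field_simp; ring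

end MeasureTheory.Supermartingale

lemma supermartingale_sub_mul_of_condExp_succ_le [IsFiniteMeasure μ] {X : ℕ → Ω → ℝ} {a : ℝ}
    (hadapted : StronglyAdapted ℱ X) (hint : ∀ i, Integrable (X i) μ)
    (hdrift : ∀ i, ∀ᵐ ω ∂μ, μ[X (i + 1)|ℱ i] ω ≤ X i ω + a) :
    Supermartingale (fun i ω ↦ X i ω - i * a) ℱ μ := by
  refine supermartingale_nat (fun i ↦ (hadapted i).sub stronglyMeasurable_const)
    (fun i ↦ (hint i).sub (integrable_const _)) fun i ↦ ?_
  filter_upwards [condExp_sub (m := ℱ i) (hint (i + 1)) (integrable_const ((i + 1 : ℕ) * a)),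
    hdrift i] with ω h₁ h₂
  refine h₁.le.trans ?_
  rw [Pi.sub_apply, condExp_const (ℱ.le i)]
  push_cast
  linarith

end

theorem stmt15_general {Ω : Type*} [m0 : MeasurableSpace Ω]
    (P : Measure Ω) [IsProbabilityMeasure P]
    (ℱ : Filtration ℕ m0)
    (X : ℕ → Ω → ℝ)
    (hadapted : Adapted ℱ X)
    (hint : ∀ i : ℕ, Integrable (X i) P)
    (a c : ℝ) (hc : 0 ≤ c)
    (hdrift : ∀ i : ℕ, ∀ᵐ ω ∂P, (P[X (i + 1)|ℱ i]) ω ≤ X i ω + a)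
    (hbdd : ∀ i : ℕ, ∀ᵐ ω ∂P, |X (i + 1) ω - X i ω| ≤ c)
    (t : ℕ) (j : ℝ) (hj : 0 ≤ j) :
    (P {ω | (t : ℝ) * a + j ≤ X t ω - X 0 ω}).toReal ≤
      Real.exp (-(j ^ 2) / (2 * t * (c + |a|) ^ 2)) := by
  have hY := supermartingale_sub_mul_of_condExp_succ_le hadapted.stronglyAdapted hint hdrift
  have hinc : ∀ i : ℕ, ∀ᵐ ω ∂P,
      |(X (i + 1) ω - (i + 1 : ℕ) * a) - (X i ω - i * a)| ≤ c + |a| := fun i ↦ by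
    filter_upwards [hbdd i] with ω h
    calc _ = |(X (i + 1) ω - X i ω) + -a| := by push_cast; ring_nf
      _ ≤ c + |a| := (abs_add_le _ _).trans (by rw [abs_neg]; linarith)
  have hset : {ω | (t : ℝ) * a + j ≤ X t ω - X 0 ω}
      = {ω | j ≤ (X t ω - t * a) - (X 0 ω - (0 : ℕ) * a)} := by
    ext ω; simp only [Set.mem_ofPred_eq, Nat.cast_zero, zero_mul, sub_zero]
    constructor <;> intro <;> linarith
  rw [hset]
  exact hY.measureReal_le_sub_le (by positivity) hinc t hj

theorem stmt15 {Ω : Type*} [m0 : MeasurableSpace Ω]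
    (P : Measure Ω) [IsProbabilityMeasure P]
    (ℱ : Filtration ℕ m0)
    (X : ℕ → Ω → ℝ)
    (hadapted : Adapted ℱ X)
    (hint : ∀ i : ℕ, Integrable (X i) P)
    (a c : ℝ) (hc : 0 ≤ c)
    (hdrift : ∀ i : ℕ, ∀ᵐ ω ∂P, (P[X (i + 1)|ℱ i]) ω ≤ X i ω + a)
    (hbdd : ∀ i : ℕ, ∀ᵐ ω ∂P, |X (i + 1) ω - X i ω| ≤ c)
    (t : ℕ) (ht : 1 ≤ t) (j : ℝ) (hj : 0 ≤ j) :
    (P {ω | (t : ℝ) * a + j ≤ X t ω - X 0 ω}).toReal ≤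
      Real.exp (-(j ^ 2) / (2 * t * (c + |a|) ^ 2)) :=
  stmt15_general (m0 := m0) P ℱ X hadapted hint a c hc hdrift hbdd t j hj
end

section
/- Let Y, Z > 0 be real numbers and let D be any real number with D ≥ Z and D ≥ 2Z/Y. Let J ≥ 1 and let u_0, u_1, …, u_J be real numbers with 0 ≤ u_j ≤ min(1, 1/Y²) for all 0 ≤ j ≤ J and u_{j−1} ≤ (1 − Y·√(u_j))·u_j for all 1 ≤ j ≤ J. Define a_0 = 1 and recursively a_j = 2 − 1/a_{j−1} + Z·u_j for 1 ≤ j ≤ J. Then a_j ≥ 1 for every 0 ≤ j ≤ J, and 1 + Z·u_j ≤ a_j ≤ 1 + D·√(u_j) for every 1 ≤ j ≤ J. -/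
/-! By induction on `j`, `a_j ≤ 1 + D √u_j`. Since `2 - 1/a ≤ a`, the recursion gives
`a_j ≤ a_{j-1} + Z u_j ≤ 1 + D √u_{j-1} + Z u_j`. The contraction and `√(1 - c) ≤ 1 - c/2` give
`√u_{j-1} ≤ (1 - Y √u_j / 2) √u_j`, and the resulting gain `D Y u_j / 2` pays for `Z u_j`
because `2 Z ≤ D Y`. The lower bounds hold because `1/a ≤ 1` once `a ≥ 1`. -/

open Real

lemma two_sub_one_div_le_self {a : ℝ} (ha : 0 < a) : 2 - 1 / a ≤ a := by
  have : 2 * a - 1 ≤ a * a := by nlinarith [sq_nonneg (a - 1)]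
  rw [sub_le_iff_le_add, ← sub_le_iff_le_add', le_div_iff₀ ha]
  linarith

lemma one_le_two_sub_one_div {a : ℝ} (ha : 1 ≤ a) : 1 ≤ 2 - 1 / a := by
  have : 1 / a ≤ 1 := (div_le_one (by linarith)).mpr ha
  linarith

lemma sqrt_one_sub_le_one_sub_half {c : ℝ} (hc : c ≤ 2) : √(1 - c) ≤ 1 - c / 2 :=
  sqrt_le_iff.mpr ⟨by linarith, by nlinarith [sq_nonneg c]⟩

lemma sqrt_le_of_le_one_sub_mul {v w c : ℝ} (hv : 0 ≤ v) (hw : 0 ≤ w) (h : v ≤ (1 - c) * w) :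
    √v ≤ (1 - c / 2) * √w := by
  by_cases hc : c ≤ 2
  · calc √v ≤ √((1 - c) * w) := sqrt_le_sqrt h
      _ = √(1 - c) * √w := sqrt_mul' _ hw
      _ ≤ (1 - c / 2) * √w := by gcongr; exact sqrt_one_sub_le_one_sub_half hc
  · -- for `c > 2` the hypothesis forces `v = w = 0`
    have hw0 : w = 0 := by nlinarith
    have hv0 : v = 0 := by subst hw0; linarith
    simp [hv0, hw0]

lemma two_sub_one_div_add_mul_le {Y Z D a v w : ℝ} (hD : 0 ≤ D) (hZD : 2 * Z ≤ D * Y)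
    (hv : 0 ≤ v) (hw : 0 ≤ w) (hvw : v ≤ (1 - Y * √w) * w) (ha : 0 < a) (haD : a ≤ 1 + D * √v) :
    2 - 1 / a + Z * w ≤ 1 + D * √w := by
  have hsqrt : √v ≤ (1 - Y * √w / 2) * √w := sqrt_le_of_le_one_sub_mul hv hw hvw
  have hgain : 0 ≤ (D * Y - 2 * Z) * √w ^ 2 := mul_nonneg (by linarith) (sq_nonneg _)
  calc 2 - 1 / a + Z * w ≤ a + Z * w := by linarith [two_sub_one_div_le_self ha]
    _ ≤ 1 + D * ((1 - Y * √w / 2) * √w) + Z * √w ^ 2 := by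
      rw [sq_sqrt hw]; nlinarith [mul_le_mul_of_nonneg_left hsqrt hD]
    _ ≤ 1 + D * √w := by nlinarith

lemma one_le_and_le_one_add_mul_sqrt {Y Z D : ℝ} (hZ : 0 ≤ Z) (hD : 0 ≤ D)
    (hZD : 2 * Z ≤ D * Y) {J : ℕ} {u a : ℕ → ℝ} (hu : ∀ j ≤ J, 0 ≤ u j)
    (hcontr : ∀ j, 1 ≤ j → j ≤ J → u (j - 1) ≤ (1 - Y * √(u j)) * u j) (ha0 : a 0 = 1)
    (harec : ∀ j, 1 ≤ j → j ≤ J → a j = 2 - 1 / a (j - 1) + Z * u j) :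
    ∀ j ≤ J, 1 ≤ a j ∧ a j ≤ 1 + D * √(u j) := by
  intro j
  induction j with
  | zero =>
    intro _
    rw [ha0]
    exact ⟨le_rfl, by linarith [mul_nonneg hD (sqrt_nonneg (u 0))]⟩
  | succ n ih =>
    intro hn
    obtain ⟨han, hanD⟩ := ih (by omega)
    have hrec := harec (n + 1) (by omega) hn
    have hc := hcontr (n + 1) (by omega) hn
    rw [Nat.add_sub_cancel] at hrec hc
    rw [hrec]
    exact ⟨by linarith [one_le_two_sub_one_div han, mul_nonneg hZ (hu (n + 1) hn)],
      two_sub_one_div_add_mul_le hD hZD (hu n (by omega)) (hu (n + 1) hn) hc (by linarith) hanD⟩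

theorem stmt17_general (Y Z D : ℝ) (hY : 0 < Y) (hZ : 0 < Z) (hDY : 2 * Z / Y ≤ D)
    (J : ℕ) (u : ℕ → ℝ)
    (hu : ∀ j : ℕ, j ≤ J → 0 ≤ u j ∧ u j ≤ min 1 (1 / Y ^ 2))
    (hcontr : ∀ j : ℕ, 1 ≤ j → j ≤ J → u (j - 1) ≤ (1 - Y * Real.sqrt (u j)) * u j)
    (a : ℕ → ℝ) (ha0 : a 0 = 1)
    (harec : ∀ j : ℕ, 1 ≤ j → j ≤ J → a j = 2 - 1 / a (j - 1) + Z * u j) :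
    (∀ j : ℕ, j ≤ J → 1 ≤ a j) ∧
      (∀ j : ℕ, 1 ≤ j → j ≤ J → 1 + Z * u j ≤ a j ∧ a j ≤ 1 + D * Real.sqrt (u j)) := by
  have hD : 0 ≤ D := le_trans (by positivity) hDY
  have hZD : 2 * Z ≤ D * Y := (div_le_iff₀ hY).mp hDY
  have key := one_le_and_le_one_add_mul_sqrt hZ.le hD hZD (fun j hj => (hu j hj).1) hcontr ha0 harec
  refine ⟨fun j hj => (key j hj).1, fun j hj hjJ => ⟨?_, (key j hjJ).2⟩⟩
  rw [harec j hj hjJ]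
  linarith [one_le_two_sub_one_div (key (j - 1) (by omega)).1]

theorem stmt17 (Y Z D : ℝ) (hY : 0 < Y) (hZ : 0 < Z) (hDZ : Z ≤ D) (hDY : 2 * Z / Y ≤ D)
    (J : ℕ) (hJ : 1 ≤ J) (u : ℕ → ℝ)
    (hu : ∀ j : ℕ, j ≤ J → 0 ≤ u j ∧ u j ≤ min 1 (1 / Y ^ 2))
    (hcontr : ∀ j : ℕ, 1 ≤ j → j ≤ J → u (j - 1) ≤ (1 - Y * Real.sqrt (u j)) * u j)
    (a : ℕ → ℝ) (ha0 : a 0 = 1)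
    (harec : ∀ j : ℕ, 1 ≤ j → j ≤ J → a j = 2 - 1 / a (j - 1) + Z * u j) :
    (∀ j : ℕ, j ≤ J → 1 ≤ a j) ∧
      (∀ j : ℕ, 1 ≤ j → j ≤ J → 1 + Z * u j ≤ a j ∧ a j ≤ 1 + D * Real.sqrt (u j)) :=
  stmt17_general Y Z D hY hZ hDY J u hu hcontr a ha0 harec
end

section
/- Let H be a finite hypergraph and k ≥ 1 an integer. Run the parallel k-stripping process on H, and let S_i denote the set of vertices removed during iteration i. Then every vertex v ∈ S_i has depth at least i: every k-stripping sequence of H ending with v has length at least i. -/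
variable {V : Type} [Fintype V] [DecidableEq V]

/-- The degree of `v` in the hypergraph with edge family `E` after the vertices of `R`
(together with all edges meeting `R`) have been deleted. -/
def degIn (E : Finset (Finset V)) (R : Finset V) (v : V) : ℕ :=
  (E.filter fun e => v ∈ e ∧ e ∩ R = ∅).card

/-- The set of not-yet-removed vertices whose current degree is less than `k`:
these are the vertices removed in the next iteration of the parallel `k`-stripping
process. -/
def lowSet (k : ℕ) (E : Finset (Finset V)) (R : Finset V) : Finset V :=
  Finset.univ.filter fun v => v ∉ R ∧ degIn E R v < k

/-- `removedSet k E n` is the set of vertices removed during the first `n` iterations of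
the parallel `k`-stripping process; `lowSet k E (removedSet k E (i-1))` is the set `S_i` of
vertices removed during iteration `i` (for `i ≥ 1`). -/
def removedSet (k : ℕ) (E : Finset (Finset V)) : ℕ → Finset V
  | 0 => ∅
  | n + 1 => removedSet k E n ∪ lowSet k E (removedSet k E n)

/-- A `k`-stripping sequence: a list of distinct vertices such that each vertex has
degree less than `k` at the moment of its removal (i.e. in the hypergraph obtained by
deleting the preceding vertices of the list and all edges containing any of them). -/
def IsStrippingSeq (k : ℕ) (E : Finset (Finset V)) (L : List V) : Prop :=
  L.Nodup ∧ ∀ j : Fin L.length, degIn E (L.take j).toFinset (L.get j) < k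

/-!
Degrees only drop as more vertices are deleted, so by induction along a `k`-stripping sequence
its `j`-th vertex (counting from `0`) has been removed by round `j + 1` of the parallel process:
its predecessors are gone by round `j`, and its degree at that point is already below `k`.
A vertex of `S_i` survives the first `i - 1` rounds, so it cannot occur in a stripping sequence
of length less than `i`.
-/

lemma degIn_anti {V : Type} [DecidableEq V] (E : Finset (Finset V)) {R R' : Finset V}
    (h : R ⊆ R') (v : V) : degIn E R' v ≤ degIn E R v := by
  refine Finset.card_le_card fun e he => ?_
  simp only [Finset.mem_filter] at he ⊢
  exact ⟨he.1, he.2.1, Finset.subset_empty.mp (he.2.2 ▸ Finset.inter_subset_inter le_rfl h)⟩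

lemma mem_lowSet {k : ℕ} {E : Finset (Finset V)} {R : Finset V} {v : V} :
    v ∈ lowSet k E R ↔ v ∉ R ∧ degIn E R v < k := by
  simp [lowSet]

lemma removedSet_mono (k : ℕ) (E : Finset (Finset V)) : Monotone (removedSet k E) :=
  monotone_nat_of_le_succ fun _ => Finset.subset_union_left

lemma IsStrippingSeq.getElem_mem_removedSet {k : ℕ} {E : Finset (Finset V)} {L : List V}
    (hL : IsStrippingSeq k E L) (j : ℕ) (hj : j < L.length) :
    L[j] ∈ removedSet k E (j + 1) := by
  induction j using Nat.strong_induction_on with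
  | _ j ih =>
  by_cases hmem : L[j] ∈ removedSet k E j
  · exact removedSet_mono k E j.le_succ hmem
  have hprefix : (L.take j).toFinset ⊆ removedSet k E j := by
    intro x hx
    obtain ⟨m, hm, rfl⟩ := List.getElem_of_mem (List.mem_toFinset.mp hx)
    rw [List.length_take] at hm
    rw [List.getElem_take]
    exact removedSet_mono k E (by omega) (ih m (by omega) (by omega))
  exact Finset.mem_union_right _
    (mem_lowSet.mpr ⟨hmem, (degIn_anti E hprefix _).trans_lt (hL.2 ⟨j, hj⟩)⟩)

lemma IsStrippingSeq.mem_removedSet_length {k : ℕ} {E : Finset (Finset V)} {L : List V}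
    (hL : IsStrippingSeq k E L) {v : V} (hv : v ∈ L) : v ∈ removedSet k E L.length := by
  obtain ⟨j, hj, rfl⟩ := List.getElem_of_mem hv
  exact removedSet_mono k E (by omega) (hL.getElem_mem_removedSet j hj)

theorem stmt18_general (k : ℕ) (E : Finset (Finset V))
    (i : ℕ) (v : V) (hv : v ∈ lowSet k E (removedSet k E (i - 1)))
    (L : List V) (hL : IsStrippingSeq k E L) (hlast : L.getLast? = some v) :
    i ≤ L.length := by
  have hvL : v ∈ L := List.mem_of_getLast? hlast
  by_contra! hshort
  exact (mem_lowSet.mp hv).1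
    (removedSet_mono k E (by omega) (hL.mem_removedSet_length hvL))

/-- Every vertex `v ∈ S_i` has depth at least `i`: every `k`-stripping sequence ending
with `v` has length at least `i`. -/
theorem stmt18 (k : ℕ) (hk : 1 ≤ k) (E : Finset (Finset V)) (hE : ∀ e ∈ E, e.Nonempty)
    (i : ℕ) (hi : 1 ≤ i) (v : V) (hv : v ∈ lowSet k E (removedSet k E (i - 1)))
    (L : List V) (hL : IsStrippingSeq k E L) (hlast : L.getLast? = some v) :
    i ≤ L.length :=
  stmt18_general k E i v hv L hL hlast
end

section
/- Let H be a finite hypergraph, k ≥ 1 an integer, and run the parallel k-stripping process on H with levels S_1, S_2, …. For a vertex v ∈ S_i, define the set R(v) = R_i(v) ∪ R_{i−1}(v) ∪ … ∪ R_1(v) as follows: set R'_i(v) = {v}, and for j = i down to 1: (a) R_j(v) is the union of the vertex sets of all connected components of the auxiliary hypergraph 𝒮_j that contain a vertex of R'_j(v); (b) R'_{j−1}(v) is the set of all vertices of S_{j−1} that share an edge of H_{j−1} with some vertex of R_i(v) ∪ … ∪ R_j(v). Then R(v) contains a k-stripping sequence ending with v: there is a k-stripping sequence of H, all of whose vertices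 lie in R(v), whose last vertex is v. -/
variable {V : Type} [Fintype V] [DecidableEq V]

/-- The set `S_{t+1}` of vertices removed during iteration `t+1` of the parallel
`k`-stripping process. -/
def levelSet (k : ℕ) (E : Finset (Finset V)) (t : ℕ) : Finset V :=
  lowSet k E (removedSet k E t)

/-- Adjacency in the auxiliary hypergraph `𝒮_{t+1}`: `u` and `w` are vertices of
`S_{t+1}` lying in a common edge of the hypergraph remaining at the start of
iteration `t+1` (an edge of `H_{t+1}`, i.e. an edge of `E` disjoint from
`removedSet k E t`). -/
def adjS (k : ℕ) (E : Finset (Finset V)) (t : ℕ) (u w : V) : Prop :=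
  ∃ f ∈ E, f ∩ removedSet k E t = ∅ ∧ u ∈ f ∧ w ∈ f ∧
    u ∈ levelSet k E t ∧ w ∈ levelSet k E t

/-- The union of the vertex sets of all connected components of the auxiliary
hypergraph `𝒮_{t+1}` that contain a vertex of `X`. -/
def compClosure (k : ℕ) (E : Finset (Finset V)) (t : ℕ) (X : Set V) : Set V :=
  {w | w ∈ levelSet k E t ∧ ∃ x ∈ X, Relation.ReflTransGen (adjS k E t) x w}

/-- For a vertex `v ∈ S_{i+1}` (0-based level `i`), `RpRR k E i v m = (R'_{i-m}, U_m)`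
where, in 0-based indexing, `R'` is the auxiliary set of Definition of `R(v)` and
`U_m = R_i ∪ R_{i-1} ∪ ⋯ ∪ R_{i-m}` is the union of the component closures computed so
far; in particular `(RpRR k E i v i).2 = R(v)`. -/
def RpRR (k : ℕ) (E : Finset (Finset V)) (i : ℕ) (v : V) : ℕ → Set V × Set V
  | 0 => ({v}, compClosure k E i {v})
  | m + 1 =>
    let U := (RpRR k E i v m).2
    let Rp' : Set V := {u | u ∈ levelSet k E (i - (m + 1)) ∧
      ∃ f ∈ E, f ∩ removedSet k E (i - (m + 1)) = ∅ ∧ u ∈ f ∧ ∃ w ∈ f, w ∈ U}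
    (Rp', U ∪ compClosure k E (i - (m + 1)) Rp')

/-! The set `R(v)` is closed downwards in the following sense: if `u ∈ R(v)` lies in `S_j` and
an edge `e ∋ u` was already destroyed before round `j`, then `e` contains a vertex `w ∈ R(v)` of
an earlier level (take `w` in the first level that `e` meets: `e` is then an edge of `H_l`, so
`w ∈ R'_l(v)`). Hence removing the vertices of `R(v)` level by level, with `v` last, destroys every
edge that the parallel process had destroyed before each vertex is reached, so each vertex has
degree less than `k` when it is removed. -/

section Sorting

variable {α : Type*} [DecidableEq α]

lemma exists_nodup_sorted_getLast (g : α → ℕ) (F : Finset α) {v : α} (hv : v ∈ F)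
    (hmax : ∀ w ∈ F, g w ≤ g v) :
    ∃ L : List α, L.Nodup ∧ L.Pairwise (fun a b => g a ≤ g b) ∧ (∀ x, x ∈ L ↔ x ∈ F) ∧
      L.getLast? = some v := by
  set L₀ := (F.erase v).toList.mergeSort fun a b => decide (g a ≤ g b)
  have hperm : L₀.Perm (F.erase v).toList := List.mergeSort_perm _ _
  have hmem₀ : ∀ x, x ∈ L₀ ↔ x ∈ F.erase v := fun x => by
    rw [hperm.mem_iff, Finset.mem_toList]
  have hsorted₀ : L₀.Pairwise fun a b => g a ≤ g b := by
    simpa using List.pairwise_mergeSort (le := fun a b => decide (g a ≤ g b))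
      (fun a b c => by simpa using le_trans) (fun a b => by simpa using le_total _ _) _
  refine ⟨L₀ ++ [v], ?_, ?_, fun x => ?_, by simp⟩
  · refine List.nodup_append.2 ⟨hperm.nodup_iff.2 (Finset.nodup_toList _), List.nodup_singleton v,
      fun a ha b hb hab => ?_⟩
    rw [List.mem_singleton] at hb
    exact ((Finset.mem_erase.1 ((hmem₀ a).1 ha)).1) (hab.trans hb)
  · refine List.pairwise_append.2 ⟨hsorted₀, List.pairwise_singleton _ _, fun a ha b hb => ?_⟩
    rw [List.mem_singleton.1 hb]
    exact hmax a (Finset.mem_of_mem_erase ((hmem₀ a).1 ha))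
  · rw [List.mem_append, hmem₀, List.mem_singleton, Finset.mem_erase]
    by_cases hx : x = v
    · simp [hx, hv]
    · simp [hx]

end Sorting

section Stripping

variable {k : ℕ} {E : Finset (Finset V)}

omit [Fintype V] in
lemma isStrippingSeq_of_pairwise (g : V → ℕ) {L : List V} (hnd : L.Nodup)
    (hsort : L.Pairwise fun a b => g a ≤ g b)
    (hdeg : ∀ u ∈ L, ∀ T : Finset V, (∀ w ∈ L, g w < g u → w ∈ T) → degIn E T u < k) :
    IsStrippingSeq k E L := by
  refine ⟨hnd, fun j => hdeg _ (L.get_mem j) _ fun w hw hlt => ?_⟩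
  obtain ⟨p, hp, rfl⟩ := List.mem_iff_getElem.1 hw
  have hpj : p < j := by
    by_contra! hjp
    rcases hjp.lt_or_eq with hjp | rfl
    · exact absurd (List.pairwise_iff_getElem.1 hsort j p j.2 hp hjp) (by simpa using hlt)
    · simp at hlt
  exact List.mem_toFinset.2 (List.mem_take_iff_getElem.2 ⟨p, by omega, rfl⟩)

omit [Fintype V] in
lemma degIn_le_degIn {R T : Finset V} {u : V}
    (h : ∀ e ∈ E, u ∈ e → (e ∩ R).Nonempty → (e ∩ T).Nonempty) :
    degIn E T u ≤ degIn E R u := by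
  refine Finset.card_le_card fun e he => ?_
  simp only [Finset.mem_filter] at he ⊢
  refine ⟨he.1, he.2.1, Finset.not_nonempty_iff_eq_empty.1 fun hR => ?_⟩
  simpa [he.2.2] using h e he.1 he.2.1 hR

lemma mem_removedSet_iff {n : ℕ} {w : V} :
    w ∈ removedSet k E n ↔ ∃ t < n, w ∈ levelSet k E t := by
  induction n with
  | zero => simp [removedSet]
  | succ n ih =>
    simp only [removedSet, Finset.mem_union, ih, Nat.lt_succ_iff_lt_or_eq, or_and_right,
      exists_or, exists_eq_left, levelSet]

lemma notMem_removedSet_of_mem_levelSet {t : ℕ} {w : V} (hw : w ∈ levelSet k E t) :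
    w ∉ removedSet k E t :=
  (Finset.mem_filter.1 hw).2.1

lemma eq_of_mem_levelSet {t t' : ℕ} {w : V} (h : w ∈ levelSet k E t)
    (h' : w ∈ levelSet k E t') : t = t' := by
  by_contra hne
  rcases Nat.lt_or_gt_of_ne hne with hlt | hlt
  · exact notMem_removedSet_of_mem_levelSet h' (mem_removedSet_iff.2 ⟨t, hlt, h⟩)
  · exact notMem_removedSet_of_mem_levelSet h (mem_removedSet_iff.2 ⟨t', hlt, h'⟩)

lemma degIn_lt_of_mem_levelSet {t : ℕ} {u : V} (hu : u ∈ levelSet k E t) {T : Finset V}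
    (hT : ∀ e ∈ E, u ∈ e → (e ∩ removedSet k E t).Nonempty → (e ∩ T).Nonempty) :
    degIn E T u < k :=
  (degIn_le_degIn hT).trans_lt (Finset.mem_filter.1 hu).2.2

/-- `w ∈ S_{stripLevel k E w + 1}`; junk value `0` on the `k`-core. -/
noncomputable def stripLevel (k : ℕ) (E : Finset (Finset V)) (w : V) : ℕ :=
  open Classical in if h : ∃ t, w ∈ levelSet k E t then Nat.find h else 0

lemma stripLevel_eq {t : ℕ} {w : V} (h : w ∈ levelSet k E t) : stripLevel k E w = t := by
  have hex : ∃ t, w ∈ levelSet k E t := ⟨t, h⟩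
  rw [stripLevel, dif_pos hex]
  exact eq_of_mem_levelSet (Nat.find_spec hex) h

lemma exists_first_levelSet_of_inter_removedSet_nonempty {t : ℕ} {e : Finset V}
    (he : (e ∩ removedSet k E t).Nonempty) :
    ∃ l < t, (∃ w ∈ e, w ∈ levelSet k E l) ∧ e ∩ removedSet k E l = ∅ := by
  classical
  have hex : ∃ l, l < t ∧ ∃ w ∈ e, w ∈ levelSet k E l := by
    obtain ⟨x, hx⟩ := he
    obtain ⟨hxe, hxR⟩ := Finset.mem_inter.1 hx
    obtain ⟨l, hl, hxl⟩ := mem_removedSet_iff.1 hxR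
    exact ⟨l, hl, x, hxe, hxl⟩
  obtain ⟨hlt, hw⟩ := Nat.find_spec hex
  refine ⟨_, hlt, hw, Finset.eq_empty_of_forall_notMem fun x hx => ?_⟩
  obtain ⟨hxe, hxR⟩ := Finset.mem_inter.1 hx
  obtain ⟨l, hl, hxl⟩ := mem_removedSet_iff.1 hxR
  exact Nat.find_min hex hl ⟨hl.trans hlt, x, hxe, hxl⟩

end Stripping

section ComponentSets

variable {k : ℕ} {E : Finset (Finset V)} {i : ℕ} {v : V}

lemma RpRR_snd_mono : Monotone fun m => (RpRR k E i v m).2 :=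
  monotone_nat_of_le_succ fun _ _ hx => Or.inl hx

lemma mem_RpRR_self (hv : v ∈ levelSet k E i) : v ∈ (RpRR k E i v i).2 :=
  RpRR_snd_mono (Nat.zero_le i) ⟨hv, v, rfl, .refl⟩

lemma exists_mem_levelSet_of_mem_RpRR {m : ℕ} {w : V} (hw : w ∈ (RpRR k E i v m).2) :
    ∃ m' ≤ m, w ∈ levelSet k E (i - m') ∧ w ∈ (RpRR k E i v m').2 := by
  induction m with
  | zero => exact ⟨0, le_rfl, by simpa using hw.1, hw⟩
  | succ m ih =>
    rcases hw with hw | hw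
    · obtain ⟨m', hm', h⟩ := ih hw
      exact ⟨m', hm'.trans m.le_succ, h⟩
    · exact ⟨m + 1, le_rfl, hw.1, Or.inr hw⟩

lemma mem_RpRR_succ {m : ℕ} {u w : V} {e : Finset V} (he : e ∈ E)
    (hdisj : e ∩ removedSet k E (i - (m + 1)) = ∅) (hue : u ∈ e) (hwe : w ∈ e)
    (hu : u ∈ (RpRR k E i v m).2) (hw : w ∈ levelSet k E (i - (m + 1))) :
    w ∈ (RpRR k E i v (m + 1)).2 :=
  Or.inr ⟨hw, w, ⟨hw, e, he, hdisj, hwe, u, hue, hu⟩, .refl⟩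

lemma exists_mem_RpRR_of_inter_removedSet_nonempty {j : ℕ} {u : V} (hji : j ≤ i)
    (hu : u ∈ (RpRR k E i v i).2) (huj : u ∈ levelSet k E j) {e : Finset V} (he : e ∈ E)
    (hue : u ∈ e) (hmeet : (e ∩ removedSet k E j).Nonempty) :
    ∃ w ∈ e, ∃ l < j, w ∈ levelSet k E l ∧ w ∈ (RpRR k E i v i).2 := by
  obtain ⟨l, hlj, ⟨w, hwe, hwl⟩, hdisj⟩ :=
    exists_first_levelSet_of_inter_removedSet_nonempty hmeet
  obtain ⟨m, hm, huj', hum⟩ := exists_mem_levelSet_of_mem_RpRR hu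
  have hjm : i - m = j := eq_of_mem_levelSet huj' huj
  have hl : i - (i - l - 1 + 1) = l := by omega
  have hum' : u ∈ (RpRR k E i v (i - l - 1)).2 := RpRR_snd_mono (by omega) hum
  refine ⟨w, hwe, l, hlj, hwl, RpRR_snd_mono (by omega : i - l - 1 + 1 ≤ i) ?_⟩
  exact mem_RpRR_succ he (by rwa [hl]) hue hwe hum' (by rwa [hl])

end ComponentSets

theorem stmt19_general (k : ℕ) (E : Finset (Finset V))
    (i : ℕ) (v : V) (hv : v ∈ levelSet k E i) :
    ∃ L : List V, IsStrippingSeq k E L ∧ (∀ x ∈ L, x ∈ (RpRR k E i v i).2) ∧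
      L.getLast? = some v := by
  classical
  have hlevel : ∀ w ∈ (RpRR k E i v i).2, ∃ t ≤ i, w ∈ levelSet k E t := fun w hw => by
    obtain ⟨m, -, hwm, -⟩ := exists_mem_levelSet_of_mem_RpRR hw
    exact ⟨i - m, Nat.sub_le i m, hwm⟩
  obtain ⟨L, hnd, hsort, hmem, hlast⟩ :=
    exists_nodup_sorted_getLast (stripLevel k E) (Finset.univ.filter (· ∈ (RpRR k E i v i).2))
      (by simpa using mem_RpRR_self hv) fun w hw => by
        obtain ⟨t, hti, hwt⟩ := hlevel w (by simpa using hw)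
        rw [stripLevel_eq hwt, stripLevel_eq hv]
        exact hti
  have hmem' : ∀ x, x ∈ L ↔ x ∈ (RpRR k E i v i).2 := by simpa using hmem
  refine ⟨L, isStrippingSeq_of_pairwise _ hnd hsort fun u hu T hT => ?_,
    fun x => (hmem' x).1, hlast⟩
  obtain ⟨t, hti, hut⟩ := hlevel u ((hmem' u).1 hu)
  refine degIn_lt_of_mem_levelSet hut fun e he hue hmeet => ?_
  obtain ⟨w, hwe, l, hlt, hwl, hwR⟩ :=
    exists_mem_RpRR_of_inter_removedSet_nonempty hti ((hmem' u).1 hu) hut he hue hmeet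
  refine ⟨w, Finset.mem_inter.2 ⟨hwe, hT w ((hmem' w).2 hwR) ?_⟩⟩
  rwa [stripLevel_eq hwl, stripLevel_eq hut]

/-- `R(v)` contains a `k`-stripping sequence ending with `v`. -/
theorem stmt19 (k : ℕ) (hk : 1 ≤ k) (E : Finset (Finset V)) (hE : ∀ e ∈ E, e.Nonempty)
    (i : ℕ) (v : V) (hv : v ∈ levelSet k E i) :
    ∃ L : List V, IsStrippingSeq k E L ∧ (∀ x ∈ L, x ∈ (RpRR k E i v i).2) ∧
      L.getLast? = some v :=
  stmt19_general k E i v hv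
end
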